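/- arXiv:1302.4776 — 2 statements merged into one kernel-verified Lean document; each statement's English description precedes it below -/
import Mathlib

section
/- (Lower bound in Theorem 9.) Fix M and a number of outliers T with 1 < T < M/2, a full-support typical distribution π on 𝒴, and full-support outlier distributions μ_1, …, μ_M on 𝒴 with μ_i ≠ π for every i. Let α be the minimum over pairs of subsets S, S' ⊆ {1,…,M} with |S| = |S'| = T and S ≠ S', and over M-tuples of probability distributions (q_1,…,q_M) on 𝒴 satisfying Σ_{i∉S} D( q_i ‖ (Σ_{k∉S} q_k)/(M−T) ) ≥ Σ_{i∉S'} D( q_i ‖ (Σ_{k∉S'} q_k)/(M−T) ), of Σ_{i∈S} D(q_i‖μ_i) + Σ_{j∉S} D(q_j‖π). Then α ≥ min_q min_{i=1,…,M} 2·B(μ_i, q), where the outer minimum is over all probability distributions q on 𝒴 satisfying D(q‖π) ≤ (1/(M−T))·( min_{1≤i<j≤M} C( μ_i(y)π(y') , π(y)μ_j(y') ) + T·C_π ), with C_π ≜ −log( min_{y∈𝒴} π(y) ). -/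
open Filter Finset Topology

noncomputable section

/-- `p` is a probability distribution on the finite alphabet. -/
def IsProb {𝓨 : Type} [Fintype 𝓨] (p : 𝓨 → ℝ) : Prop :=
  (∀ y, 0 ≤ p y) ∧ ∑ y, p y = 1

/-- `p` has full support. -/
def FullSupport {𝓨 : Type} (p : 𝓨 → ℝ) : Prop := ∀ y, 0 < p y

/-- Relative entropy `D(q‖p)` (natural log, convention `0·log 0 = 0`,
which holds since `Real.log 0 = 0` in Mathlib). -/
def KL {𝓨 : Type} [Fintype 𝓨] (q p : 𝓨 → ℝ) : ℝ :=
  ∑ y, q y * Real.log (q y / p y)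

/-- Bhattacharyya distance `B(p,q) = -log ∑ √(p y) √(q y)`. -/
def Bhat {𝓨 : Type} [Fintype 𝓨] (p q : 𝓨 → ℝ) : ℝ :=
  - Real.log (∑ y, Real.sqrt (p y) * Real.sqrt (q y))

/-- Chernoff information `C(p,q) = sup_{s ∈ [0,1]} -log ∑ (p y)^s (q y)^(1-s)`. -/
def Chernoff {𝓨 : Type} [Fintype 𝓨] (p q : 𝓨 → ℝ) : ℝ :=
  ⨆ s : Set.Icc (0:ℝ) 1, - Real.log (∑ y, p y ^ (s : ℝ) * q y ^ (1 - (s : ℝ)))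

/-- The mixture `(∑_{k ∉ S} q_k)/(M - T)`. -/
def mixS {𝓨 : Type} [Fintype 𝓨] {M : ℕ} (T : ℕ) (q : Fin M → 𝓨 → ℝ)
    (S : Finset (Fin M)) : 𝓨 → ℝ :=
  fun a => (∑ k ∈ Finset.univ \ S, q k a) / ((M : ℝ) - T)

/-- Feasible values of the optimization problem in Theorem 8: over pairs of
distinct hypotheses `S ≠ S'` of size `T` and tuples `(q_1,…,q_M)` of
distributions satisfying
`∑_{i∉S} D(q_i ‖ (∑_{k∉S} q_k)/(M-T)) ≥ ∑_{i∉S'} D(q_i ‖ (∑_{k∉S'} q_k)/(M-T))`,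
with objective `∑_{i∈S} D(q_i‖μ_i) + ∑_{j∉S} D(q_j‖π)`. -/
def alphaSet {𝓨 : Type} [Fintype 𝓨] (M T : ℕ) (μ : Fin M → 𝓨 → ℝ) (π : 𝓨 → ℝ) : Set ℝ :=
  {x | ∃ S S' : Finset (Fin M), S.card = T ∧ S'.card = T ∧ S ≠ S' ∧
    ∃ q : Fin M → 𝓨 → ℝ, (∀ j, IsProb (q j)) ∧
      (∑ i ∈ Finset.univ \ S, KL (q i) (mixS T q S) ≥
       ∑ i ∈ Finset.univ \ S', KL (q i) (mixS T q S')) ∧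
      x = ∑ i ∈ S, KL (q i) (μ i) + ∑ j ∈ Finset.univ \ S, KL (q j) π}

/-!
Let `(S, S', q)` attain `α` and pick `i ∈ S \ S'`. For a family `q_k, k ∈ s`, with average `m`,
the compensation identity `∑ D(q_k‖π) = ∑ D(q_k‖m) + |s| D(m‖π)` holds. Applied to the complements
of `S'` and of `S`, with averages `r` and `m_S`, and combined with the constraint, it gives
`2 B(μ_i, r) ≤ D(q_i‖μ_i) + D(q_i‖r) ≤ ∑_{k ∈ S} D(q_k‖μ_k) + ∑_{k ∉ S} D(q_k‖m_S) ≤ α`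
and `(M - T) D(r‖π) ≤ ∑_k D(q_k‖π) ≤ α + T C_π`, because `D(q‖π) ≤ D(q‖μ) + C_π`.
So `r` is feasible for the lower bound as soon as `α ≤ C(μ_i ⊗ π, π ⊗ μ_j)` for all `i ≠ j`.
For this, put the tilted distributions `∝ μ_i^s π^(1-s)` and `∝ π^s μ_j^(1-s)` at `i` and `j`
(and `μ_k` or `π` elsewhere), with `s` chosen by the intermediate value theorem so that the
objectives for `S ∋ i` and for `S' ∋ j` agree; their common value is then
`-log ∑ (μ_i ⊗ π)^s (π ⊗ μ_j)^(1-s)`. Both minima exist by compactness.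
-/

variable {𝓨 : Type}

lemma sub_le_mul_log_div {p r : ℝ} (hp : 0 ≤ p) (hr : 0 ≤ r) (h : p ≠ 0 → 0 < r) :
    p - r ≤ p * Real.log (p / r) := by
  rcases hp.eq_or_lt with rfl | hp
  · simpa using hr
  · have hr := h hp.ne'
    have := mul_le_mul_of_nonneg_left (Real.one_sub_inv_le_log_of_pos (div_pos hp hr)) hp.le
    rwa [inv_div, mul_sub, mul_one, mul_div_cancel₀ _ hp.ne'] at this

lemma rpow_mul_rpow_pos {a b : ℝ} (ha : 0 < a) (hb : 0 < b) (s : ℝ) :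
    0 < a ^ s * b ^ (1 - s) :=
  mul_pos (Real.rpow_pos_of_pos ha s) (Real.rpow_pos_of_pos hb (1 - s))

lemma continuous_rpow_mul_rpow {a b : ℝ} (ha : a ≠ 0) (hb : b ≠ 0) :
    Continuous fun s : ℝ => a ^ s * b ^ (1 - s) := by
  fun_prop (disch := assumption)

lemma sum_div_pos_of_mem {ι : Type*} {q : ι → 𝓨 → ℝ} {s : Finset ι}
    (hq : ∀ k ∈ s, ∀ y, 0 ≤ q k y) {c : ℝ} (hc : 0 < c) {k : ι} (hk : k ∈ s) {y : 𝓨}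
    (hy : q k y ≠ 0) : 0 < (∑ j ∈ s, q j y) / c :=
  div_pos (((hq k hk y).lt_of_ne' hy).trans_le (single_le_sum (fun j hj => hq j hj y) hk)) hc

variable [Fintype 𝓨]

lemma KL_eq_sum_sub {q r : 𝓨 → ℝ} (h : ∀ y, q y ≠ 0 → r y ≠ 0) :
    KL q r = ∑ y, (q y * Real.log (q y) - q y * Real.log (r y)) := by
  refine sum_congr rfl fun y _ => ?_
  rcases eq_or_ne (q y) 0 with hy | hy
  · simp [hy]
  · rw [Real.log_div hy (h y hy), mul_sub]

lemma KL_sub_KL {q r₁ r₂ : 𝓨 → ℝ} (h₁ : ∀ y, q y ≠ 0 → r₁ y ≠ 0)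
    (h₂ : ∀ y, q y ≠ 0 → r₂ y ≠ 0) :
    KL q r₁ - KL q r₂ = ∑ y, q y * (Real.log (r₂ y) - Real.log (r₁ y)) := by
  rw [KL_eq_sum_sub h₁, KL_eq_sum_sub h₂, ← sum_sub_distrib]
  exact sum_congr rfl fun y _ => by ring

lemma KL_self (p : 𝓨 → ℝ) : KL p p = 0 :=
  sum_eq_zero fun y _ => by by_cases h : p y = 0 <;> simp [h]

lemma IsProb.exists_ne_zero {p : 𝓨 → ℝ} (hp : IsProb p) : ∃ y, p y ≠ 0 := by
  by_contra! h
  simpa [h] using hp.2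

lemma IsProb.le_one {p : 𝓨 → ℝ} (hp : IsProb p) (y : 𝓨) : p y ≤ 1 :=
  hp.2 ▸ single_le_sum (fun y _ => hp.1 y) (mem_univ y)

lemma neg_log_sum_le_KL {p w : 𝓨 → ℝ} (hp : IsProb p) (hw : ∀ y, 0 ≤ w y)
    (h : ∀ y, p y ≠ 0 → 0 < w y) : -Real.log (∑ y, w y) ≤ KL p w := by
  obtain ⟨y₀, hy₀⟩ := hp.exists_ne_zero
  have hZ : 0 < ∑ y, w y := sum_pos' (fun y _ => hw y) ⟨y₀, mem_univ _, h y₀ hy₀⟩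
  have hterm : ∀ y, p y - w y / ∑ y, w y
      ≤ p y * Real.log (p y / w y) + p y * Real.log (∑ y, w y) := by
    intro y
    refine (sub_le_mul_log_div (hp.1 y) (div_nonneg (hw y) hZ.le)
      fun hy => div_pos (h y hy) hZ).trans_eq ?_
    rcases eq_or_ne (p y) 0 with hy | hy
    · simp [hy]
    · rw [div_div_eq_mul_div, Real.log_div (mul_ne_zero hy hZ.ne') (h y hy).ne',
        Real.log_mul hy hZ.ne', Real.log_div hy (h y hy).ne']
      ring
  have := sum_le_sum fun y (_ : y ∈ univ) => hterm y
  rw [sum_sub_distrib, ← sum_div, hp.2, div_self hZ.ne', sub_self, sum_add_distrib,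
    ← sum_mul, hp.2, one_mul] at this
  unfold KL
  linarith

lemma KL_nonneg {q r : 𝓨 → ℝ} (hq : IsProb q) (hr : IsProb r) (h : ∀ y, q y ≠ 0 → 0 < r y) :
    0 ≤ KL q r := by
  simpa [hr.2] using neg_log_sum_le_KL hq hr.1 h

lemma two_mul_Bhat_le_KL_add_KL {μ r p : 𝓨 → ℝ} (hμ : FullSupport μ) (hr : ∀ y, 0 ≤ r y)
    (hp : IsProb p) (h : ∀ y, p y ≠ 0 → 0 < r y) :
    2 * Bhat μ r ≤ KL p μ + KL p r := by
  set w : 𝓨 → ℝ := fun y => Real.sqrt (μ y) * Real.sqrt (r y)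
  have hw : ∀ y, p y ≠ 0 → 0 < w y := fun y hy =>
    mul_pos (Real.sqrt_pos.2 (hμ y)) (Real.sqrt_pos.2 (h y hy))
  have hsplit : KL p μ + KL p r = 2 * KL p w := by
    unfold KL
    rw [← sum_add_distrib, mul_sum]
    refine sum_congr rfl fun y _ => ?_
    rcases eq_or_ne (p y) 0 with hy | hy
    · simp [hy]
    · rw [Real.log_div hy (hμ y).ne', Real.log_div hy (h y hy).ne',
        Real.log_div hy (hw y hy).ne', Real.log_mul (Real.sqrt_pos.2 (hμ y)).ne'
          (Real.sqrt_pos.2 (h y hy)).ne', Real.log_sqrt (hμ y).le, Real.log_sqrt (hr y)]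
      ring
  have := neg_log_sum_le_KL hp (fun y => by positivity) hw
  rw [hsplit]
  unfold Bhat
  linarith

lemma continuous_KL {p : 𝓨 → ℝ} (hp : FullSupport p) : Continuous fun q : 𝓨 → ℝ => KL q p := by
  refine continuous_finsetSum _ fun y _ => ?_
  have : (fun q : 𝓨 → ℝ => q y * Real.log (q y / p y))
      = fun q => p y * (q y / p y * Real.log (q y / p y)) := by
    funext q
    rw [← mul_assoc, mul_div_cancel₀ _ (hp y).ne']
  rw [this]
  exact continuous_const.mul (Real.continuous_mul_log.comp (by fun_prop))

lemma KL_le_KL_add_neg_log_iInf [Nonempty 𝓨] {q μ π : 𝓨 → ℝ} (hq : IsProb q) (hμ : IsProb μ)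
    (hμf : FullSupport μ) (hπf : FullSupport π) :
    KL q π ≤ KL q μ + -Real.log (⨅ y, π y) := by
  obtain ⟨y₀, hy₀⟩ := exists_eq_ciInf_of_finite (f := π)
  have hdiff := KL_sub_KL (q := q) (fun y _ => (hπf y).ne') (fun y _ => (hμf y).ne')
  have hterm : ∀ y, q y * (Real.log (μ y) - Real.log (π y)) ≤ q y * -Real.log (⨅ y, π y) := by
    intro y
    refine mul_le_mul_of_nonneg_left ?_ (hq.1 y)
    have := Real.log_nonpos (hμ.1 y) (hμ.le_one y)
    have := Real.log_le_log (hy₀ ▸ hπf y₀) (ciInf_le (Set.finite_range π).bddBelow y)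
    linarith
  have := sum_le_sum fun y (_ : y ∈ univ) => hterm y
  rw [← sum_mul, hq.2, one_mul] at this
  linarith

section Mixture

variable {ι : Type*} {q : ι → 𝓨 → ℝ}

/-- The compensation identity; for `c = #s` the mixture is the average of the `q k`. -/
lemma sum_KL_eq_sum_KL_mix_add (s : Finset ι) (hq : ∀ k ∈ s, ∀ y, 0 ≤ q k y) {c : ℝ}
    (hc : 0 < c) {π : 𝓨 → ℝ} (hπ : FullSupport π) :
    ∑ k ∈ s, KL (q k) π = ∑ k ∈ s, KL (q k) (fun y => (∑ j ∈ s, q j y) / c)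
      + c * KL (fun y => (∑ j ∈ s, q j y) / c) π := by
  set m : 𝓨 → ℝ := fun y => (∑ j ∈ s, q j y) / c
  have hterm : ∀ k ∈ s, KL (q k) π
      = KL (q k) m + ∑ y, q k y * (Real.log (m y) - Real.log (π y)) := fun k hk => by
    rw [← KL_sub_KL (fun y _ => (hπ y).ne')
      (fun y hy => (sum_div_pos_of_mem hq hc hk hy).ne'), add_sub_cancel]
  rw [sum_congr rfl hterm, sum_add_distrib, sum_comm, KL_eq_sum_sub fun y _ => (hπ y).ne',
    mul_sum]
  congr 1
  refine sum_congr rfl fun y _ => ?_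
  rw [← sum_mul, show ∑ j ∈ s, q j y = c * m y by simp only [m]; field_simp]
  ring

end Mixture

section MixS

variable {M T : ℕ} {q : Fin M → 𝓨 → ℝ} {S : Finset (Fin M)}

lemma mixS_pos (hq : ∀ k, IsProb (q k)) (hTM : T < M) {k : Fin M} (hk : k ∉ S) {y : 𝓨}
    (hy : q k y ≠ 0) : 0 < mixS T q S y :=
  sum_div_pos_of_mem (fun k _ => (hq k).1) (sub_pos.2 (by exact_mod_cast hTM))
    (by simpa using hk) hy

lemma isProb_mixS (hq : ∀ k, IsProb (q k)) (hS : S.card = T) (hTM : T < M) :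
    IsProb (mixS T q S) := by
  have hc : (0 : ℝ) < M - T := sub_pos.2 (by exact_mod_cast hTM)
  refine ⟨fun y => div_nonneg (sum_nonneg fun k _ => (hq k).1 y) hc.le, ?_⟩
  unfold mixS
  rw [← sum_div, sum_comm, sum_congr rfl fun k _ => (hq k).2, sum_const, ← compl_eq_univ_sdiff,
    card_compl, Fintype.card_fin, hS, nsmul_one, Nat.cast_sub hTM.le, div_self hc.ne']

lemma sum_KL_mixS_le_sum_KL (hq : ∀ k, IsProb (q k)) (hS : S.card = T) (hTM : T < M)
    {π : 𝓨 → ℝ} (hπ : IsProb π) (hπf : FullSupport π) :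
    ∑ k ∈ univ \ S, KL (q k) (mixS T q S) ≤ ∑ k ∈ univ \ S, KL (q k) π := by
  have hc : (0 : ℝ) < M - T := sub_pos.2 (by exact_mod_cast hTM)
  rw [sum_KL_eq_sum_KL_mix_add _ (fun k _ => (hq k).1) hc hπf]
  exact le_add_of_nonneg_right
    (mul_nonneg hc.le (KL_nonneg (isProb_mixS hq hS hTM) hπ fun y _ => hπf y))

lemma mul_KL_mixS_le_sum_KL (hq : ∀ k, IsProb (q k)) (hS : S.card = T) (hTM : T < M)
    {π : 𝓨 → ℝ} (hπf : FullSupport π) :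
    ((M : ℝ) - T) * KL (mixS T q S) π ≤ ∑ k ∈ univ \ S, KL (q k) π := by
  have hc : (0 : ℝ) < M - T := sub_pos.2 (by exact_mod_cast hTM)
  rw [sum_KL_eq_sum_KL_mix_add _ (fun k _ => (hq k).1) hc hπf]
  exact le_add_of_nonneg_left (sum_nonneg fun k hk =>
    KL_nonneg (hq k) (isProb_mixS hq hS hTM) fun y hy => mixS_pos hq hTM (by simpa using hk) hy)

end MixS

section Compactness

variable {M T : ℕ}

lemma isCompact_setOf_forall_isProb (ι : Type*) [Fintype ι] :
    IsCompact {q : ι → 𝓨 → ℝ | ∀ k, IsProb (q k)} := by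
  convert isCompact_univ_pi fun _ : ι => isCompact_stdSimplex ℝ 𝓨
  ext q
  simp [IsProb, stdSimplex]

/-- By the compensation identity with reference `1`, this is a difference of continuous
functions. -/
lemma continuousOn_sum_KL_mixS (hTM : T < M) (S : Finset (Fin M)) :
    ContinuousOn (fun q : Fin M → 𝓨 → ℝ => ∑ k ∈ univ \ S, KL (q k) (mixS T q S))
      {q | ∀ k, IsProb (q k)} := by
  have hc : (0 : ℝ) < M - T := sub_pos.2 (by exact_mod_cast hTM)
  have hone : FullSupport (fun _ : 𝓨 => (1 : ℝ)) := fun _ => one_pos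
  refine ContinuousOn.congr (f := fun q => ∑ k ∈ univ \ S, KL (q k) (fun _ => 1)
      - ((M : ℝ) - T) * KL (mixS T q S) (fun _ => 1)) (Continuous.continuousOn ?_) fun q hq => ?_
  · refine (continuous_finsetSum _ fun k _ => (continuous_KL hone).comp (continuous_apply k)).sub
      (continuous_const.mul ((continuous_KL hone).comp ?_))
    unfold mixS
    fun_prop
  · exact eq_sub_of_add_eq (sum_KL_eq_sum_KL_mix_add _ (fun k _ => (hq k).1) hc hone).symm

lemma isCompact_alphaSet (hTM : T < M) {μ : Fin M → 𝓨 → ℝ} {π : 𝓨 → ℝ}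
    (hμf : ∀ i, FullSupport (μ i)) (hπf : FullSupport π) : IsCompact (alphaSet M T μ π) := by
  set P := {q : Fin M → 𝓨 → ℝ | ∀ k, IsProb (q k)}
  have hP : IsCompact P := isCompact_setOf_forall_isProb (Fin M)
  have hset : alphaSet M T μ π = ⋃ (S : Finset (Fin M)) (S' : Finset (Fin M))
      (_ : S.card = T ∧ S'.card = T ∧ S ≠ S'),
      (fun q => ∑ i ∈ S, KL (q i) (μ i) + ∑ j ∈ univ \ S, KL (q j) π) ''
        {q ∈ P | ∑ i ∈ univ \ S', KL (q i) (mixS T q S')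
          ≤ ∑ i ∈ univ \ S, KL (q i) (mixS T q S)} := by
    ext x
    simp only [alphaSet, Set.mem_iUnion, Set.mem_image, Set.mem_ofPred_eq, exists_prop, P]
    constructor
    · rintro ⟨S, S', hS, hS', hSS', q, hq, hcon, rfl⟩
      exact ⟨S, S', ⟨hS, hS', hSS'⟩, q, ⟨hq, hcon⟩, rfl⟩
    · rintro ⟨S, S', ⟨hS, hS', hSS'⟩, q, ⟨hq, hcon⟩, rfl⟩
      exact ⟨S, S', hS, hS', hSS', q, hq, hcon, rfl⟩
  rw [hset]
  refine isCompact_iUnion fun S => isCompact_iUnion fun S' => isCompact_iUnion fun _ => ?_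
  refine (hP.of_isClosed_subset (hP.isClosed.isClosed_le (continuousOn_sum_KL_mixS hTM S')
    (continuousOn_sum_KL_mixS hTM S)) fun q hq => hq.1).image ?_
  exact (continuous_finsetSum _ fun i _ => (continuous_KL (hμf i)).comp (continuous_apply i)).add
    (continuous_finsetSum _ fun j _ => (continuous_KL hπf).comp (continuous_apply j))

lemma continuousOn_Bhat {μ : 𝓨 → ℝ} (hμ : FullSupport μ) :
    ContinuousOn (Bhat μ) {q | IsProb q} := by
  refine ((Continuous.continuousOn (by fun_prop)).log fun q hq => ?_).neg
  obtain ⟨y₀, hy₀⟩ := hq.exists_ne_zero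
  exact (sum_pos' (fun y _ => by positivity) ⟨y₀, mem_univ _,
    mul_pos (Real.sqrt_pos.2 (hμ y₀)) (Real.sqrt_pos.2 ((hq.1 y₀).lt_of_ne' hy₀))⟩).ne'

lemma isCompact_setOf_iInf_two_mul_Bhat {ι : Type*} [Fintype ι] [Nonempty ι]
    {μ : ι → 𝓨 → ℝ} {π : 𝓨 → ℝ} (hμf : ∀ i, FullSupport (μ i)) (hπf : FullSupport π) (β : ℝ) :
    IsCompact {x : ℝ | ∃ q : 𝓨 → ℝ, IsProb q ∧ KL q π ≤ β ∧ x = ⨅ i, 2 * Bhat (μ i) q} := by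
  have hK : IsCompact {q : 𝓨 → ℝ | IsProb q ∧ KL q π ≤ β} :=
    (isCompact_stdSimplex ℝ 𝓨).inter_right (isClosed_le (continuous_KL hπf) continuous_const)
  have hf : ContinuousOn (fun q => ⨅ i, 2 * Bhat (μ i) q) {q | IsProb q ∧ KL q π ≤ β} := by
    simp_rw [← inf'_univ_eq_ciInf]
    exact ContinuousOn.finset_inf'_apply _ fun i _ =>
      (continuousOn_const.mul (continuousOn_Bhat (hμf i))).mono fun q hq => hq.1
  convert hK.image_of_continuousOn hf using 1
  ext x
  simp only [Set.mem_ofPred_eq, Set.mem_image]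
  constructor
  · rintro ⟨q, hq, hKL, rfl⟩
    exact ⟨q, ⟨hq, hKL⟩, rfl⟩
  · rintro ⟨q, ⟨hq, hKL⟩, rfl⟩
    exact ⟨q, hq, hKL, rfl⟩

end Compactness

section Tilting

/-- The tilted distribution `∝ p^s r^(1-s)`; its normalizer is the sum inside `Chernoff p r`. -/
def tilt (p r : 𝓨 → ℝ) (s : ℝ) : 𝓨 → ℝ :=
  fun y => p y ^ s * r y ^ (1 - s) / ∑ y', p y' ^ s * r y' ^ (1 - s)

variable {p r : 𝓨 → ℝ}

lemma tilt_zero (hr : IsProb r) : tilt p r 0 = r := by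
  funext y
  simp [tilt, hr.2]

lemma tilt_one (hp : IsProb p) : tilt p r 1 = p := by
  funext y
  simp [tilt, hp.2]

variable [Nonempty 𝓨]

lemma sum_rpow_mul_rpow_pos (hp : FullSupport p) (hr : FullSupport r) (s : ℝ) :
    0 < ∑ y, p y ^ s * r y ^ (1 - s) :=
  sum_pos (fun y _ => rpow_mul_rpow_pos (hp y) (hr y) s) univ_nonempty

lemma tilt_pos (hp : FullSupport p) (hr : FullSupport r) (s : ℝ) : FullSupport (tilt p r s) :=
  fun y => div_pos (rpow_mul_rpow_pos (hp y) (hr y) s) (sum_rpow_mul_rpow_pos hp hr s)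

lemma isProb_tilt (hp : FullSupport p) (hr : FullSupport r) (s : ℝ) : IsProb (tilt p r s) :=
  ⟨fun y => (tilt_pos hp hr s y).le, by
    simp only [tilt]
    rw [← sum_div, div_self (sum_rpow_mul_rpow_pos hp hr s).ne']⟩

lemma continuous_tilt (hp : FullSupport p) (hr : FullSupport r) : Continuous (tilt p r) :=
  continuous_pi fun y => (continuous_rpow_mul_rpow (hp y).ne' (hr y).ne').div
    (continuous_finsetSum _ fun y _ => continuous_rpow_mul_rpow (hp y).ne' (hr y).ne')
    fun s => (sum_rpow_mul_rpow_pos hp hr s).ne'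

lemma mul_KL_tilt_add_mul_KL_tilt (hp : FullSupport p) (hr : FullSupport r) (s : ℝ) :
    s * KL (tilt p r s) p + (1 - s) * KL (tilt p r s) r
      = -Real.log (∑ y, p y ^ s * r y ^ (1 - s)) := by
  have hlog : ∀ y, Real.log (tilt p r s y) = s * Real.log (p y) + (1 - s) * Real.log (r y)
      - Real.log (∑ y, p y ^ s * r y ^ (1 - s)) := fun y => by
    rw [tilt, Real.log_div (rpow_mul_rpow_pos (hp y) (hr y) s).ne'
      (sum_rpow_mul_rpow_pos hp hr s).ne',
      Real.log_mul (Real.rpow_pos_of_pos (hp y) s).ne' (Real.rpow_pos_of_pos (hr y) _).ne',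
      Real.log_rpow (hp y), Real.log_rpow (hr y)]
  rw [KL_eq_sum_sub fun y _ => (hp y).ne', KL_eq_sum_sub fun y _ => (hr y).ne', mul_sum, mul_sum,
    ← sum_add_distrib]
  simp_rw [hlog]
  have hsum := (isProb_tilt hp hr s).2
  calc _ = ∑ y, tilt p r s y * -Real.log (∑ y, p y ^ s * r y ^ (1 - s)) :=
        sum_congr rfl fun y _ => by ring
    _ = _ := by rw [← sum_mul, hsum, one_mul]

end Tilting

section Chernoff

variable {Z : Type} [Fintype Z] [Nonempty Z]

lemma le_Chernoff {P Q : Z → ℝ} (hP : FullSupport P) (hQ : FullSupport Q) {s : ℝ}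
    (hs : s ∈ Set.Icc (0 : ℝ) 1) : -Real.log (∑ z, P z ^ s * Q z ^ (1 - s)) ≤ Chernoff P Q := by
  have hcont : Continuous fun t : ℝ => -Real.log (∑ z, P z ^ t * Q z ^ (1 - t)) :=
    ((continuous_finsetSum _ fun z _ => continuous_rpow_mul_rpow (hP z).ne' (hQ z).ne').log
      fun t => (sum_rpow_mul_rpow_pos hP hQ t).ne').neg
  refine le_ciSup
    (f := fun t : Set.Icc (0 : ℝ) 1 => -Real.log (∑ z, P z ^ (t : ℝ) * Q z ^ (1 - (t : ℝ))))
    (((isCompact_Icc (a := (0 : ℝ)) (b := 1)).bddAbove_image hcont.continuousOn).mono ?_) ⟨s, hs⟩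
  rintro _ ⟨t, rfl⟩
  exact ⟨t, t.2, rfl⟩

variable {𝓨₁ 𝓨₂ : Type} [Fintype 𝓨₁] [Fintype 𝓨₂]

lemma sum_prod_rpow_mul_rpow {p₁ r₁ : 𝓨₁ → ℝ} {p₂ r₂ : 𝓨₂ → ℝ} (hp₁ : ∀ y, 0 ≤ p₁ y)
    (hr₁ : ∀ y, 0 ≤ r₁ y) (hp₂ : ∀ y, 0 ≤ p₂ y) (hr₂ : ∀ y, 0 ≤ r₂ y) (s : ℝ) :
    ∑ z : 𝓨₁ × 𝓨₂, (p₁ z.1 * p₂ z.2) ^ s * (r₁ z.1 * r₂ z.2) ^ (1 - s)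
      = (∑ y, p₁ y ^ s * r₁ y ^ (1 - s)) * ∑ y, p₂ y ^ s * r₂ y ^ (1 - s) := by
  rw [Fintype.sum_prod_type, sum_mul_sum]
  refine sum_congr rfl fun y₁ _ => sum_congr rfl fun y₂ _ => ?_
  rw [Real.mul_rpow (hp₁ y₁) (hp₂ y₂), Real.mul_rpow (hr₁ y₁) (hr₂ y₂)]
  ring

variable [Nonempty 𝓨₁] [Nonempty 𝓨₂]

lemma exists_KL_add_KL_eq_le_Chernoff {p₁ r₁ : 𝓨₁ → ℝ} {p₂ r₂ : 𝓨₂ → ℝ}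
    (hp₁ : IsProb p₁) (hp₁f : FullSupport p₁) (hr₁ : IsProb r₁) (hr₁f : FullSupport r₁)
    (hp₂ : IsProb p₂) (hp₂f : FullSupport p₂) (hr₂ : IsProb r₂) (hr₂f : FullSupport r₂) :
    ∃ q₁ q₂, IsProb q₁ ∧ IsProb q₂ ∧ KL q₁ p₁ + KL q₂ p₂ = KL q₁ r₁ + KL q₂ r₂ ∧
      KL q₁ p₁ + KL q₂ p₂ ≤ Chernoff (fun z : 𝓨₁ × 𝓨₂ => p₁ z.1 * p₂ z.2)
        (fun z : 𝓨₁ × 𝓨₂ => r₁ z.1 * r₂ z.2) := by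
  set t₁ := tilt p₁ r₁
  set t₂ := tilt p₂ r₂
  set f : ℝ → ℝ := fun s => KL (t₁ s) p₁ + KL (t₂ s) p₂ - (KL (t₁ s) r₁ + KL (t₂ s) r₂)
  have hf : Continuous f := by
    have h₁ := continuous_tilt hp₁f hr₁f
    have h₂ := continuous_tilt hp₂f hr₂f
    exact (((continuous_KL hp₁f).comp h₁).add ((continuous_KL hp₂f).comp h₂)).sub
      (((continuous_KL hr₁f).comp h₁).add ((continuous_KL hr₂f).comp h₂))
  have hf0 : 0 ≤ f 0 := by
    simp only [f, t₁, t₂, tilt_zero hr₁, tilt_zero hr₂, KL_self, add_zero, sub_zero]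
    exact add_nonneg (KL_nonneg hr₁ hp₁ fun y _ => hp₁f y) (KL_nonneg hr₂ hp₂ fun y _ => hp₂f y)
  have hf1 : f 1 ≤ 0 := by
    simp only [f, t₁, t₂, tilt_one hp₁, tilt_one hp₂, KL_self, add_zero, zero_sub, neg_nonpos]
    exact add_nonneg (KL_nonneg hp₁ hr₁ fun y _ => hr₁f y) (KL_nonneg hp₂ hr₂ fun y _ => hr₂f y)
  obtain ⟨s, hs, hfs⟩ := intermediate_value_Icc' zero_le_one hf.continuousOn ⟨hf1, hf0⟩
  have hbal : KL (t₁ s) p₁ + KL (t₂ s) p₂ = KL (t₁ s) r₁ + KL (t₂ s) r₂ := sub_eq_zero.1 hfs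
  refine ⟨t₁ s, t₂ s, isProb_tilt hp₁f hr₁f s, isProb_tilt hp₂f hr₂f s, hbal, ?_⟩
  -- at the balance point the common value is the `s`-average of the two sides
  have hval : KL (t₁ s) p₁ + KL (t₂ s) p₂ = -Real.log (∑ z : 𝓨₁ × 𝓨₂,
      (p₁ z.1 * p₂ z.2) ^ s * (r₁ z.1 * r₂ z.2) ^ (1 - s)) := by
    rw [sum_prod_rpow_mul_rpow hp₁.1 hr₁.1 hp₂.1 hr₂.1, Real.log_mul
      (sum_rpow_mul_rpow_pos hp₁f hr₁f s).ne' (sum_rpow_mul_rpow_pos hp₂f hr₂f s).ne',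
      neg_add, ← mul_KL_tilt_add_mul_KL_tilt hp₁f hr₁f, ← mul_KL_tilt_add_mul_KL_tilt hp₂f hr₂f]
    linear_combination (1 - s) * hbal
  rw [hval]
  exact le_Chernoff (fun z : 𝓨₁ × 𝓨₂ => mul_pos (hp₁f z.1) (hp₂f z.2))
    (fun z : 𝓨₁ × 𝓨₂ => mul_pos (hr₁f z.1) (hr₂f z.2)) hs

end Chernoff

lemma sum_KL_add_sum_KL_compl_eq {ι : Type*} [Fintype ι] [DecidableEq ι] {μ : ι → 𝓨 → ℝ}
    {π : 𝓨 → ℝ} {S₀ : Finset ι} {a b : ι} (hab : a ≠ b) (hb : b ∉ S₀) {q : ι → 𝓨 → ℝ}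
    (hq : ∀ k, k ≠ a → k ≠ b → q k = if k ∈ S₀ then μ k else π) :
    ∑ k ∈ insert a S₀, KL (q k) (μ k) + ∑ k ∈ univ \ insert a S₀, KL (q k) π
      = KL (q a) (μ a) + KL (q b) π := by
  set ν : ι → 𝓨 → ℝ := fun k => if k ∈ insert a S₀ then μ k else π
  have hin : ∑ k ∈ insert a S₀, KL (q k) (μ k) = ∑ k ∈ insert a S₀, KL (q k) (ν k) :=
    sum_congr rfl fun k hk => by simp only [ν, if_pos hk]
  have hout : ∑ k ∈ univ \ insert a S₀, KL (q k) π = ∑ k ∈ (insert a S₀)ᶜ, KL (q k) (ν k) := by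
    rw [compl_eq_univ_sdiff]
    exact sum_congr rfl fun k hk => by simp only [ν, if_neg (mem_sdiff.1 hk).2]
  rw [hin, hout, sum_add_sum_compl, Fintype.sum_eq_add a b hab fun k ⟨hka, hkb⟩ => ?_]
  · simp [ν, hab.symm, hb]
  · rw [hq k hka hkb]
    by_cases hk : k ∈ S₀ <;> simp [ν, hk, hka, KL_self]

section Outliers

variable {M T : ℕ} {μ : Fin M → 𝓨 → ℝ} {π : 𝓨 → ℝ}

lemma exists_mem_alphaSet_le_Chernoff [Nonempty 𝓨] (hT : 1 ≤ T) (hTM : T < M)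
    (hμ : ∀ i, IsProb (μ i)) (hπ : IsProb π) (hμf : ∀ i, FullSupport (μ i))
    (hπf : FullSupport π) {i j : Fin M} (hij : i ≠ j) :
    ∃ x ∈ alphaSet M T μ π, x ≤ Chernoff (fun z : 𝓨 × 𝓨 => μ i z.1 * π z.2)
      (fun z : 𝓨 × 𝓨 => π z.1 * μ j z.2) := by
  obtain ⟨q₁, q₂, hq₁, hq₂, hbal, hle⟩ :=
    exists_KL_add_KL_eq_le_Chernoff (hμ i) (hμf i) hπ hπf hπ hπf (hμ j) (hμf j)
  obtain ⟨S₀, hS₀, hS₀card⟩ := exists_subset_card_eq (s := univ \ {i, j}) (n := T - 1) (by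
    rw [← compl_eq_univ_sdiff, card_compl, Fintype.card_fin, card_pair hij]
    omega)
  have hiS₀ : i ∉ S₀ := fun h => by simpa using hS₀ h
  have hjS₀ : j ∉ S₀ := fun h => by simpa using hS₀ h
  set q : Fin M → 𝓨 → ℝ := fun k => if k = i then q₁ else if k = j then q₂
    else if k ∈ S₀ then μ k else π
  have hq : ∀ k, IsProb (q k) := fun k => by
    simp only [q]
    split_ifs
    exacts [hq₁, hq₂, hμ k, hπ]
  have hqi : q i = q₁ := by simp [q]
  have hqj : q j = q₂ := by simp [q, hij.symm]
  have hq_other : ∀ k, k ≠ i → k ≠ j → q k = if k ∈ S₀ then μ k else π := fun k hki hkj => by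
    simp [q, hki, hkj]
  have hcard : ∀ a ∉ S₀, (insert a S₀).card = T := fun a ha => by
    rw [card_insert_of_notMem ha, hS₀card]
    omega
  have hSS' : insert i S₀ ≠ insert j S₀ := fun h => by
    have := h ▸ mem_insert_self i S₀
    simp [hij, hiS₀] at this
  -- whichever way the constraint goes, the objective is the balanced value
  rcases le_total (∑ k ∈ univ \ insert j S₀, KL (q k) (mixS T q (insert j S₀)))
      (∑ k ∈ univ \ insert i S₀, KL (q k) (mixS T q (insert i S₀))) with h | h
  · refine ⟨_, ⟨_, _, hcard i hiS₀, hcard j hjS₀, hSS', q, hq, h, rfl⟩, ?_⟩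
    rwa [sum_KL_add_sum_KL_compl_eq hij hjS₀ hq_other, hqi, hqj]
  · refine ⟨_, ⟨_, _, hcard j hjS₀, hcard i hiS₀, hSS'.symm, q, hq, h, rfl⟩, ?_⟩
    rwa [sum_KL_add_sum_KL_compl_eq hij.symm hiS₀ fun k hkj hki => hq_other k hki hkj, hqi,
      hqj, add_comm, ← hbal]

lemma exists_isProb_Bhat_le_of_mem_alphaSet [Nonempty 𝓨] (hTM : T < M)
    (hμ : ∀ i, IsProb (μ i)) (hπ : IsProb π) (hμf : ∀ i, FullSupport (μ i))
    (hπf : FullSupport π) {x : ℝ} (hx : x ∈ alphaSet M T μ π) :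
    ∃ r, IsProb r ∧ ((M : ℝ) - T) * KL r π ≤ x + T * -Real.log (⨅ y, π y) ∧
      ∃ i, 2 * Bhat (μ i) r ≤ x := by
  obtain ⟨S, S', hS, hS', hSS', q, hq, hcon, rfl⟩ := hx
  obtain ⟨i, hiS, hiS'⟩ : ∃ i ∈ S, i ∉ S' := by
    by_contra! h
    exact hSS' (eq_of_subset_of_card_le h (by rw [hS, hS']))
  have hKLμ : ∀ k, 0 ≤ KL (q k) (μ k) := fun k => KL_nonneg (hq k) (hμ k) fun y _ => hμf k y
  have hKLπ : ∀ k, 0 ≤ KL (q k) π := fun k => KL_nonneg (hq k) hπ fun y _ => hπf y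
  have hmix : ∀ k ∉ S', ∀ y, q k y ≠ 0 → 0 < mixS T q S' y := fun k hk y hy =>
    mixS_pos hq hTM hk hy
  refine ⟨mixS T q S', isProb_mixS hq hS' hTM, ?_, i, ?_⟩
  · calc ((M : ℝ) - T) * KL (mixS T q S') π ≤ ∑ k ∈ univ \ S', KL (q k) π :=
          mul_KL_mixS_le_sum_KL hq hS' hTM hπf
      _ ≤ ∑ k ∈ S, KL (q k) π + ∑ k ∈ univ \ S, KL (q k) π := by
          rw [← compl_eq_univ_sdiff S, sum_add_sum_compl]
          exact sum_le_univ_sum_of_nonneg hKLπ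
      _ ≤ ∑ k ∈ S, (KL (q k) (μ k) + -Real.log (⨅ y, π y)) + ∑ k ∈ univ \ S, KL (q k) π := by
          gcongr with k
          exact KL_le_KL_add_neg_log_iInf (hq k) (hμ k) (hμf k) hπf
      _ = _ := by
          rw [sum_add_distrib, sum_const, hS, nsmul_eq_mul]
          ring
  · calc 2 * Bhat (μ i) (mixS T q S') ≤ KL (q i) (μ i) + KL (q i) (mixS T q S') :=
          two_mul_Bhat_le_KL_add_KL (hμf i) (isProb_mixS hq hS' hTM).1 (hq i) (hmix i hiS')
      _ ≤ ∑ k ∈ S, KL (q k) (μ k) + ∑ k ∈ univ \ S', KL (q k) (mixS T q S') :=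
          add_le_add (single_le_sum (fun k _ => hKLμ k) hiS) (single_le_sum
            (fun k hk => KL_nonneg (hq k) (isProb_mixS hq hS' hTM) (hmix k (by simpa using hk)))
            (by simpa using hiS'))
      _ ≤ ∑ k ∈ S, KL (q k) (μ k) + ∑ k ∈ univ \ S, KL (q k) π :=
          add_le_add le_rfl (hcon.trans (sum_KL_mixS_le_sum_KL hq hS hTM hπ hπf))

end Outliers

theorem statement18_general (𝓨 : Type) [Fintype 𝓨] [Nonempty 𝓨]
    (M T : ℕ) (hT1 : 1 < T) (hT2 : 2 * T < M)
    (μ : Fin M → 𝓨 → ℝ) (π : 𝓨 → ℝ)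
    (hμ : ∀ i, IsProb (μ i)) (hπ : IsProb π)
    (hμf : ∀ i, FullSupport (μ i)) (hπf : FullSupport π) :
    ∃ a L : ℝ, IsLeast (alphaSet M T μ π) a ∧
      IsLeast {x : ℝ | ∃ q : 𝓨 → ℝ, IsProb q ∧
        KL q π ≤ (1 / ((M : ℝ) - T)) *
          ((⨅ ij : {ij : Fin M × Fin M // ij.1 < ij.2},
              Chernoff (fun z : 𝓨 × 𝓨 => μ ij.val.1 z.1 * π z.2)
                (fun z : 𝓨 × 𝓨 => π z.1 * μ ij.val.2 z.2)) +
            T * (- Real.log (⨅ y, π y))) ∧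
        x = ⨅ i : Fin M, 2 * Bhat (μ i) q} L ∧
      L ≤ a := by
  set C := ⨅ ij : {ij : Fin M × Fin M // ij.1 < ij.2},
    Chernoff (fun z : 𝓨 × 𝓨 => μ ij.val.1 z.1 * π z.2) (fun z : 𝓨 × 𝓨 => π z.1 * μ ij.val.2 z.2)
  have hTM : T < M := by omega
  have : Nonempty (Fin M) := ⟨⟨0, by omega⟩⟩
  have : Nonempty {ij : Fin M × Fin M // ij.1 < ij.2} :=
    ⟨⟨(⟨0, by omega⟩, ⟨1, by omega⟩), by simp [Fin.lt_def]⟩⟩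
  obtain ⟨x₀, hx₀, -⟩ := exists_mem_alphaSet_le_Chernoff hT1.le hTM hμ hπ hμf hπf
    (i := ⟨0, by omega⟩) (j := ⟨1, by omega⟩) (by simp [Fin.ext_iff])
  obtain ⟨a, ha⟩ := (isCompact_alphaSet hTM hμf hπf).exists_isLeast ⟨x₀, hx₀⟩
  have haC : a ≤ C := le_ciInf fun ij => by
    obtain ⟨x, hx, hxC⟩ := exists_mem_alphaSet_le_Chernoff hT1.le hTM hμ hπ hμf hπf ij.2.ne
    exact (ha.2 hx).trans hxC
  obtain ⟨r, hr, hrπ, i, hri⟩ := exists_isProb_Bhat_le_of_mem_alphaSet hTM hμ hπ hμf hπf ha.1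
  have hrC : KL r π ≤ 1 / ((M : ℝ) - T) * (C + T * -Real.log (⨅ y, π y)) := by
    rw [one_div, inv_mul_eq_div, le_div_iff₀ (sub_pos.2 (by exact_mod_cast hTM))]
    linarith
  obtain ⟨L, hL⟩ :=
    (isCompact_setOf_iInf_two_mul_Bhat hμf hπf _).exists_isLeast ⟨_, r, hr, hrC, rfl⟩
  exact ⟨a, L, ha, hL,
    (hL.2 ⟨r, hr, hrC, rfl⟩).trans ((ciInf_le (Set.finite_range _).bddBelow i).trans hri)⟩

/-- lower bound in Theorem 9. `α ≥ LB`, where `α` is the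
minimum of the optimization problem of Theorem 8 and `LB` is the minimum of
`min_i 2B(μ_i,q)` over distributions `q` with
`D(q‖π) ≤ (min_{i<j} C(μᵢ⊗π, π⊗μⱼ) + T·C_π)/(M-T)`, `C_π = -log min_y π(y)`. -/
theorem statement18 (𝓨 : Type) [Fintype 𝓨] [Nonempty 𝓨]
    (M T : ℕ) (hT1 : 1 < T) (hT2 : 2 * T < M)
    (μ : Fin M → 𝓨 → ℝ) (π : 𝓨 → ℝ)
    (hμ : ∀ i, IsProb (μ i)) (hπ : IsProb π)
    (hμf : ∀ i, FullSupport (μ i)) (hπf : FullSupport π)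
    (hne : ∀ i, μ i ≠ π) :
    ∃ a L : ℝ, IsLeast (alphaSet M T μ π) a ∧
      IsLeast {x : ℝ | ∃ q : 𝓨 → ℝ, IsProb q ∧
        KL q π ≤ (1 / ((M : ℝ) - T)) *
          ((⨅ ij : {ij : Fin M × Fin M // ij.1 < ij.2},
              Chernoff (fun z : 𝓨 × 𝓨 => μ ij.val.1 z.1 * π z.2)
                (fun z : 𝓨 × 𝓨 => π z.1 * μ ij.val.2 z.2)) +
            T * (- Real.log (⨅ y, π y))) ∧
        x = ⨅ i : Fin M, 2 * Bhat (μ i) q} L ∧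
      L ≤ a :=
  statement18_general 𝓨 M T hT1 hT2 μ π hμ hπ hμf hπf
end
end

section
/- (Theorem 11.) Suppose |𝒴| ≥ 2. Fix M, a full-support typical distribution π on 𝒴, subsets ∅ ≠ S_1 ⊊ S_2 ⊆ {1,…,M} with |S_2| < M/2, and full-support probability distributions μ_i ≠ π on 𝒴 for each i ∈ S_1. Consider the binary hypothesis testing problem between hypothesis 1 (outlier set S_1) and hypothesis 2 (outlier set S_2): given additionally full-support distributions μ_j ≠ π for j ∈ S_2∖S_1, under hypothesis h ∈ {1,2} the probability of an observation y ∈ (𝒴^M)^n is P_h(y) = ∏_{k=1}^n [ ∏_{i∈S_h} μ_i(y_k^{(i)}) ∏_{j∉S_h} π(y_k^{(j)}) ]. Then there does not exist a sequence of tests δ_n : (𝒴^M)^n → {1,2} (which may depend on π and on (μ_i)_{i∈S_1}) such that for every choice of full-support distributions μ_j ≠ π, j ∈ S_2∖S_1, both liminf_{n→∞} −(1/n) log P_1{ y : δ_n(y) ≠ 1 } > 0 and liminf_{n→∞} −(1/n) log P_2{ y : δ_n(y) ≠ 2 } > 0. That is, when the outlier coordinates can be distinctly distributed and their number is unknown,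 there cannot exist a universally exponentially consistent test, even when the typical distribution is known and the null hypothesis is excluded. -/
/-!
Under hypothesis 1 the law of the observations does not involve the unknown outlier laws `ν`,
while under hypothesis 2 it can be brought within a likelihood-ratio factor `e^{M r n}` of
hypothesis 1 by taking `ν = (1 - t) π + t 𝟙_{z₀}` with `r = t / π z₀`. Changing measure,
`P₁{δ ≠ 1} ≥ e^{-M r n} P₂{δ = 1}`, and `P₂{δ = 1} → 1` because the error exponent under
hypothesis 2 is positive; so the exponent under hypothesis 1, which does not depend on `t`, is at
most `M t / π z₀` for every `t ∈ (0, 1)`, hence zero.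
-/

open Filter Finset Topology

noncomputable section

/-- Probability of an event under a pmf on a finite sample space. -/
def probOf {α : Type} [Fintype α] (P : α → ℝ) (A : Set α) : ℝ :=
  ∑ y, A.indicator P y

lemma liminf_le_of_frequently_le_of_tendsto {u v : ℕ → ℝ} {b : ℝ}
    (huv : ∃ᶠ n in atTop, u n ≤ v n) (hv : Tendsto v atTop (𝓝 b))
    (hu : IsBoundedUnder (· ≥ ·) atTop u) :
    liminf u atTop ≤ b := by
  refine le_of_forall_pos_le_add fun η hη => liminf_le_of_frequently_le ?_ hu
  refine (huv.and_eventually (hv.eventually (gt_mem_nhds (lt_add_of_pos_right b hη)))).mono ?_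
  exact fun n ⟨h₁, h₂⟩ => h₁.trans h₂.le

def errorExponent (p : ℕ → ℝ) : ℝ :=
  liminf (fun n : ℕ => -(1 / (n : ℝ)) * Real.log (p n)) atTop

lemma neg_inv_mul_log_nonneg {x : ℝ} (hx₀ : 0 ≤ x) (hx₁ : x ≤ 1) (n : ℕ) :
    0 ≤ -(1 / (n : ℝ)) * Real.log x := by
  have := Real.log_nonpos hx₀ hx₁
  have : (0 : ℝ) ≤ 1 / n := by positivity
  nlinarith

lemma neg_inv_mul_log_le {a x : ℝ} (ha : 0 < a) (hax : a ≤ x) (n : ℕ) :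
    -(1 / (n : ℝ)) * Real.log x ≤ -(1 / (n : ℝ)) * Real.log a := by
  have := Real.log_le_log ha hax
  have : (0 : ℝ) ≤ 1 / n := by positivity
  nlinarith

lemma isBoundedUnder_ge_neg_inv_mul_log {p : ℕ → ℝ} (hp₀ : ∀ n, 0 ≤ p n) (hp₁ : ∀ n, p n ≤ 1) :
    IsBoundedUnder (· ≥ ·) atTop (fun n : ℕ => -(1 / (n : ℝ)) * Real.log (p n)) :=
  isBoundedUnder_of ⟨0, fun n => neg_inv_mul_log_nonneg (hp₀ n) (hp₁ n) n⟩

lemma eventually_lt_of_errorExponent_pos {p : ℕ → ℝ} (hp₀ : ∀ n, 0 ≤ p n) (hp₁ : ∀ n, p n ≤ 1)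
    (hp : 0 < errorExponent p) {ε : ℝ} (hε : 0 < ε) :
    ∀ᶠ n in atTop, p n < ε := by
  by_contra h
  have hfreq : ∃ᶠ n : ℕ in atTop,
      -(1 / (n : ℝ)) * Real.log (p n) ≤ Real.log ε⁻¹ / n := by
    refine (not_eventually.mp h).mono fun n hn => ?_
    calc -(1 / (n : ℝ)) * Real.log (p n) ≤ -(1 / (n : ℝ)) * Real.log ε :=
          neg_inv_mul_log_le hε (not_lt.mp hn) n
      _ = Real.log ε⁻¹ / n := by rw [Real.log_inv]; ring
  have := liminf_le_of_frequently_le_of_tendsto hfreq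
    (tendsto_const_div_atTop_nhds_zero_nat _) (isBoundedUnder_ge_neg_inv_mul_log hp₀ hp₁)
  exact (hp.trans_le this).false

lemma errorExponent_le_of_exp_mul_le {p q : ℕ → ℝ} {R : ℝ} (hp₀ : ∀ n, 0 ≤ p n)
    (hp₁ : ∀ n, p n ≤ 1) (hq₁ : ∀ n, q n ≤ 1) (hp : 0 < errorExponent p)
    (hpq : ∀ n : ℕ, Real.exp (-(R * n)) * (1 - p n) ≤ q n) :
    errorExponent q ≤ R := by
  have hq₀ : ∀ n, 0 ≤ q n := fun n =>
    (mul_nonneg (Real.exp_pos _).le (sub_nonneg.mpr (hp₁ n))).trans (hpq n)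
  have hbound : ∀ᶠ n : ℕ in atTop,
      -(1 / (n : ℝ)) * Real.log (q n) ≤ R + Real.log 2 / n := by
    filter_upwards [eventually_lt_of_errorExponent_pos hp₀ hp₁ hp one_half_pos,
      eventually_ne_atTop 0] with n hn hn₀
    have hhalf : Real.exp (-(R * n)) / 2 ≤ q n := by
      nlinarith [hpq n, Real.exp_pos (-(R * n))]
    calc -(1 / (n : ℝ)) * Real.log (q n)
        ≤ -(1 / (n : ℝ)) * Real.log (Real.exp (-(R * n)) / 2) :=
          neg_inv_mul_log_le (by positivity) hhalf n
      _ = R + Real.log 2 / n := by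
          rw [Real.log_div (Real.exp_pos _).ne' two_ne_zero, Real.log_exp]
          field_simp
          ring
  refine liminf_le_of_frequently_le_of_tendsto hbound.frequently ?_
    (isBoundedUnder_ge_neg_inv_mul_log hq₀ hq₁)
  simpa using (tendsto_const_div_atTop_nhds_zero_nat (Real.log 2)).const_add R

section probOf

variable {α : Type} [Fintype α]

lemma probOf_nonneg {P : α → ℝ} (hP : ∀ y, 0 ≤ P y) (A : Set α) : 0 ≤ probOf P A :=
  sum_nonneg fun y _ => Set.indicator_nonneg (fun z _ => hP z) y

lemma probOf_le_sum {P : α → ℝ} (hP : ∀ y, 0 ≤ P y) (A : Set α) : probOf P A ≤ ∑ y, P y :=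
  sum_le_sum fun y _ => Set.indicator_le_self' (fun z _ => hP z) y

lemma probOf_add_probOf_compl (P : α → ℝ) (A : Set α) :
    probOf P A + probOf P Aᶜ = ∑ y, P y := by
  simp only [probOf, ← sum_add_distrib, Set.indicator_self_add_compl_apply]

lemma probOf_le_mul_probOf {P Q : α → ℝ} {c : ℝ} (h : ∀ y, P y ≤ c * Q y) (A : Set α) :
    probOf P A ≤ c * probOf Q A := by
  rw [probOf, probOf, mul_sum]
  refine sum_le_sum fun y _ => ?_
  by_cases hy : y ∈ A <;> simp [hy, h y]

end probOf

def obsProb {ι 𝓨 : Type} [Fintype ι] (p : ι → 𝓨 → ℝ) (n : ℕ) (y : Fin n → ι → 𝓨) : ℝ :=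
  ∏ k, ∏ j, p j (y k j)

section obsProb

variable {ι 𝓨 : Type} [Fintype ι]

lemma obsProb_nonneg {p : ι → 𝓨 → ℝ} (hp : ∀ j z, 0 ≤ p j z) (n : ℕ) (y : Fin n → ι → 𝓨) :
    0 ≤ obsProb p n y :=
  prod_nonneg fun _ _ => prod_nonneg fun _ _ => hp _ _

lemma sum_obsProb [Fintype 𝓨] [DecidableEq ι] {p : ι → 𝓨 → ℝ} (hp : ∀ j, ∑ z, p j z = 1)
    (n : ℕ) : ∑ y, obsProb p n y = 1 := by
  have hrow : ∑ w : ι → 𝓨, ∏ j, p j (w j) = 1 := by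
    rw [← Fintype.prod_sum]
    exact prod_eq_one fun j _ => hp j
  unfold obsProb
  rw [← Fintype.prod_sum fun (_ : Fin n) (w : ι → 𝓨) => ∏ j, p j (w j), hrow, prod_const_one]

lemma obsProb_le_exp_mul {p q : ι → 𝓨 → ℝ} {r : ℝ} (hq : ∀ j z, 0 ≤ q j z)
    (hqp : ∀ j z, q j z ≤ Real.exp r * p j z) (n : ℕ) (y : Fin n → ι → 𝓨) :
    obsProb q n y ≤ Real.exp (Fintype.card ι * r * n) * obsProb p n y := by
  calc obsProb q n y ≤ ∏ k, ∏ j, Real.exp r * p j (y k j) :=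
        prod_le_prod (fun _ _ => prod_nonneg fun _ _ => hq _ _) fun _ _ =>
          prod_le_prod (fun _ _ => hq _ _) fun _ _ => hqp _ _
    _ = Real.exp (Fintype.card ι * r * n) * obsProb p n y := by
        simp only [prod_mul_distrib, prod_const, card_univ, Fintype.card_fin,
          ← Real.exp_nat_mul, obsProb]
        ring_nf

end obsProb

theorem errorExponent_le_of_le_exp_mul {ι 𝓨 : Type} [Fintype ι] [DecidableEq ι] [Fintype 𝓨]
    {F G : ι → 𝓨 → ℝ} (hF : ∀ j, IsProb (F j)) (hG : ∀ j, IsProb (G j)) {r : ℝ}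
    (hGF : ∀ j z, G j z ≤ Real.exp r * F j z) (A : (n : ℕ) → Set (Fin n → ι → 𝓨))
    (hA : 0 < errorExponent fun n => probOf (obsProb G n) (A n)ᶜ) :
    errorExponent (fun n => probOf (obsProb F n) (A n)) ≤ Fintype.card ι * r := by
  have hF₀ := obsProb_nonneg fun j => (hF j).1
  have hG₀ := obsProb_nonneg fun j => (hG j).1
  have hF₁ := sum_obsProb fun j => (hF j).2
  have hG₁ := sum_obsProb fun j => (hG j).2
  refine errorExponent_le_of_exp_mul_le (fun n => probOf_nonneg (hG₀ n) _)
    (fun n => (probOf_le_sum (hG₀ n) _).trans (hG₁ n).le)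
    (fun n => (probOf_le_sum (hF₀ n) _).trans (hF₁ n).le) hA fun n => ?_
  have hchange := probOf_le_mul_probOf (obsProb_le_exp_mul (fun j => (hG j).1) hGF n) (A n)
  have hcompl := probOf_add_probOf_compl (obsProb G n) (A n)
  rw [hG₁] at hcompl
  rw [← eq_sub_of_add_eq hcompl, Real.exp_neg, inv_mul_le_iff₀ (Real.exp_pos _)]
  simpa only [mul_assoc] using hchange

lemma IsProb.exists_lt_one {𝓨 : Type} [Fintype 𝓨] {π : 𝓨 → ℝ} (hπ : IsProb π)
    (hcard : 2 ≤ Fintype.card 𝓨) : ∃ z, π z < 1 := by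
  by_contra! h
  have : (Fintype.card 𝓨 : ℝ) ≤ ∑ z, π z := by
    simpa using sum_le_sum fun z (_ : z ∈ univ) => h z
  have : (2 : ℝ) ≤ Fintype.card 𝓨 := by exact_mod_cast hcard
  linarith [hπ.2]

def perturbToward {𝓨 : Type} [DecidableEq 𝓨] (π : 𝓨 → ℝ) (z₀ : 𝓨) (t : ℝ) : 𝓨 → ℝ :=
  fun z => (1 - t) * π z + t * if z = z₀ then 1 else 0

section perturbToward

variable {𝓨 : Type} [DecidableEq 𝓨] {π : 𝓨 → ℝ} {z₀ : 𝓨} {t : ℝ}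

lemma isProb_perturbToward [Fintype 𝓨] (hπ : IsProb π) (ht₀ : 0 ≤ t) (ht₁ : t ≤ 1) :
    IsProb (perturbToward π z₀ t) := by
  refine ⟨fun z => ?_, ?_⟩
  · have := hπ.1 z
    unfold perturbToward
    split_ifs <;> nlinarith
  · simp [perturbToward, sum_add_distrib, ← mul_sum, hπ.2]

lemma fullSupport_perturbToward (hπ : FullSupport π) (ht₀ : 0 ≤ t) (ht₁ : t < 1) :
    FullSupport (perturbToward π z₀ t) := fun z => by
  have := hπ z
  unfold perturbToward
  split_ifs <;> nlinarith

lemma perturbToward_ne (hz₀ : π z₀ < 1) (ht : t ≠ 0) : perturbToward π z₀ t ≠ π := fun h => by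
  have h₀ := congrFun h z₀
  simp only [perturbToward, ↓reduceIte] at h₀
  have : t * (1 - π z₀) = 0 := by linarith
  exact (mul_ne_zero ht (sub_ne_zero.mpr hz₀.ne')) this

lemma perturbToward_le_exp_mul (hπ : ∀ z, 0 ≤ π z) (hz₀ : 0 < π z₀) (ht : 0 ≤ t) (z : 𝓨) :
    perturbToward π z₀ t z ≤ Real.exp (t / π z₀) * π z := by
  have hratio : t * (if z = z₀ then 1 else 0) ≤ t / π z₀ * π z := by
    split_ifs with h
    · rw [h, div_mul_cancel₀ _ hz₀.ne', mul_one]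
    · have := hπ z
      rw [mul_zero]
      positivity
  have := Real.add_one_le_exp (t / π z₀)
  have := hπ z
  unfold perturbToward
  nlinarith

end perturbToward

theorem errorExponent_le_of_outlier_le_exp_mul {ι 𝓨 : Type} [Fintype ι] [DecidableEq ι]
    [Fintype 𝓨] {π : 𝓨 → ℝ} {S₁ S₂ : Finset ι} {μ ν : ι → 𝓨 → ℝ} (hπ : IsProb π)
    (hμ : ∀ i ∈ S₁, IsProb (μ i)) (hν : ∀ j ∈ S₂ \ S₁, IsProb (ν j)) {r : ℝ} (hr : 0 ≤ r)
    (hνπ : ∀ j ∈ S₂ \ S₁, ∀ z, ν j z ≤ Real.exp r * π z) (A : (n : ℕ) → Set (Fin n → ι → 𝓨))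
    (hA : 0 < errorExponent fun n =>
      probOf (obsProb (fun j => if j ∈ S₁ then μ j else if j ∈ S₂ then ν j else π) n) (A n)ᶜ) :
    errorExponent (fun n => probOf (obsProb (fun j => if j ∈ S₁ then μ j else π) n) (A n))
      ≤ Fintype.card ι * r := by
  have hexp : 1 ≤ Real.exp r := Real.one_le_exp hr
  refine errorExponent_le_of_le_exp_mul (fun j => ?_) (fun j => ?_) (fun j z => ?_) A hA
  · split_ifs with h
    exacts [hμ j h, hπ]
  · split_ifs with h₁ h₂
    exacts [hμ j h₁, hν j (mem_sdiff.mpr ⟨h₂, h₁⟩), hπ]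
  · split_ifs with h₁ h₂
    · exact le_mul_of_one_le_left ((hμ j h₁).1 z) hexp
    · exact hνπ j (mem_sdiff.mpr ⟨h₂, h₁⟩) z
    · exact le_mul_of_one_le_left (hπ.1 z) hexp

theorem statement19_general (𝓨 : Type) [Fintype 𝓨] (hcard : 2 ≤ Fintype.card 𝓨)
    (M : ℕ) (π : 𝓨 → ℝ) (hπ : IsProb π) (hπf : FullSupport π)
    (S₁ S₂ : Finset (Fin M))
    (μ : Fin M → 𝓨 → ℝ)
    (hμ : ∀ i ∈ S₁, IsProb (μ i) ∧ FullSupport (μ i) ∧ μ i ≠ π) :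
    ¬ ∃ δ : (n : ℕ) → (Fin n → Fin M → 𝓨) → Bool,
      ∀ ν : Fin M → 𝓨 → ℝ,
        (∀ j ∈ S₂ \ S₁, IsProb (ν j) ∧ FullSupport (ν j) ∧ ν j ≠ π) →
        (0 < Filter.liminf (fun n : ℕ =>
            -(1 / (n : ℝ)) * Real.log (probOf
              (fun y : Fin n → Fin M → 𝓨 =>
                ∏ k, ∏ j, (if j ∈ S₁ then μ j else π) (y k j))
              {y | δ n y ≠ false})) atTop) ∧
        (0 < Filter.liminf (fun n : ℕ =>
            -(1 / (n : ℝ)) * Real.log (probOf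
              (fun y : Fin n → Fin M → 𝓨 =>
                ∏ k, ∏ j, (if j ∈ S₁ then μ j
                  else if j ∈ S₂ then ν j else π) (y k j))
              {y | δ n y ≠ true})) atTop) := by
  classical
  rintro ⟨δ, hδ⟩
  obtain ⟨z₀, hz₀⟩ := hπ.exists_lt_one hcard
  have hν : ∀ t ∈ Set.Ioo (0 : ℝ) 1, IsProb (perturbToward π z₀ t) ∧
      FullSupport (perturbToward π z₀ t) ∧ perturbToward π z₀ t ≠ π := fun t ht =>
    ⟨isProb_perturbToward hπ ht.1.le ht.2.le, fullSupport_perturbToward hπf ht.1.le ht.2,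
      perturbToward_ne hz₀ ht.1.ne'⟩
  set E := errorExponent fun n =>
    probOf (obsProb (fun j => if j ∈ S₁ then μ j else π) n) {y | δ n y ≠ false}
  have hE_pos : 0 < E := (hδ _ fun _ _ => hν (1 / 2) ⟨by norm_num, by norm_num⟩).1
  have hE_le : ∀ t ∈ Set.Ioo (0 : ℝ) 1, E ≤ M * (t / π z₀) := fun t ht => by
    have hA : ∀ n, {y : Fin n → Fin M → 𝓨 | δ n y ≠ false}ᶜ = {y | δ n y ≠ true} := fun n => by
      ext y; simp
    simpa only [Fintype.card_fin] using errorExponent_le_of_outlier_le_exp_mul hπ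
      (fun i hi => (hμ i hi).1) (fun _ _ => (hν t ht).1) (div_nonneg ht.1.le (hπf z₀).le)
      (fun _ _ => perturbToward_le_exp_mul hπ.1 (hπf z₀) ht.1.le) (fun n => {y | δ n y ≠ false})
      (by simp only [hA]; exact (hδ _ fun _ _ => hν t ht).2)
  have hlim : Tendsto (fun t : ℝ => M * (t / π z₀)) (𝓝[>] 0) (𝓝 0) := by
    simpa using ((continuous_id.div_const (π z₀)).const_mul (M : ℝ)).continuousWithinAt
      (s := Set.Ioi 0) (x := 0) |>.tendsto
  linarith [ge_of_tendsto hlim (eventually_of_mem (Ioo_mem_nhdsGT one_pos) hE_le)]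

/-- Theorem 11.  With nested outlier sets `∅ ≠ S₁ ⊊ S₂`,
`|S₂| < M/2`, known typical distribution `π` and known outlier distributions
`(μ_i)_{i∈S₁}`, no sequence of binary tests (hypothesis 1: outlier set `S₁`;
hypothesis 2: outlier set `S₂`) can have strictly positive error exponents
under both hypotheses for every choice of full-support outlier distributions
`μ_j ≠ π`, `j ∈ S₂∖S₁`.  (Hypothesis 1 is encoded by `false` and hypothesis 2
by `true`.) -/
theorem statement19 (𝓨 : Type) [Fintype 𝓨] (hcard : 2 ≤ Fintype.card 𝓨)
    (M : ℕ) (π : 𝓨 → ℝ) (hπ : IsProb π) (hπf : FullSupport π)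
    (S₁ S₂ : Finset (Fin M)) (hS₁ : S₁.Nonempty) (hS₁₂ : S₁ ⊂ S₂)
    (hS₂ : 2 * S₂.card < M)
    (μ : Fin M → 𝓨 → ℝ)
    (hμ : ∀ i ∈ S₁, IsProb (μ i) ∧ FullSupport (μ i) ∧ μ i ≠ π) :
    ¬ ∃ δ : (n : ℕ) → (Fin n → Fin M → 𝓨) → Bool,
      ∀ ν : Fin M → 𝓨 → ℝ,
        (∀ j ∈ S₂ \ S₁, IsProb (ν j) ∧ FullSupport (ν j) ∧ ν j ≠ π) →
        (0 < Filter.liminf (fun n : ℕ =>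
            -(1 / (n : ℝ)) * Real.log (probOf
              (fun y : Fin n → Fin M → 𝓨 =>
                ∏ k, ∏ j, (if j ∈ S₁ then μ j else π) (y k j))
              {y | δ n y ≠ false})) atTop) ∧
        (0 < Filter.liminf (fun n : ℕ =>
            -(1 / (n : ℝ)) * Real.log (probOf
              (fun y : Fin n → Fin M → 𝓨 =>
                ∏ k, ∏ j, (if j ∈ S₁ then μ j
                  else if j ∈ S₂ then ν j else π) (y k j))
              {y | δ n y ≠ true})) atTop) :=
  statement19_general 𝓨 hcard M π hπ hπf S₁ S₂ μ hμ
end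
end
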